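/- arXiv:2411.04485 — 2 statements merged into one kernel-verified Lean document; each statement's English description precedes it below -/
import Mathlib

section
/- Let $\mathcal{G}$ be a finite group of $d\times d$ integer matrices containing an element $\bar{E}$ such that $I_d - \bar{E}$ is invertible. Let $\mathsf{M}$ be a $d\times d$ integer dilation matrix compatible with $\mathcal{G}$ (i.e., $\mathsf{M}E\mathsf{M}^{-1}\in\mathcal{G}$ for all $E\in\mathcal{G}$), and let $a$ be a finitely supported $\mathsf{M}$-interpolatory filter having symmetry type $(\mathcal{G}, c, \epsilon)$ for some $c\in\mathbb{R}^d$ and $\epsilon\in\{-1,1\}$, i.e., $a(E(k-c)+c)=\epsilon\, a(k)$ for all $k\in\mathbb{Z}^d$, $E\in\mathcal{G}$. If $(I_d-\bar{E})c \in \mathsf{M}\mathbb{Z}^d$, then $\epsilon = 1$ and $c = 0$. -/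
open scoped BigOperators Classical
open Asymptotics Filter Matrix

noncomputable section

/-- Real cast of an integer vector. -/
def zr {d : ℕ} (k : Fin d → ℤ) : Fin d → ℝ := fun i => (k i : ℝ)

/-- Fourier series `û(ξ) = ∑_k u(k) e^{-i k·ξ}` of a filter on `ℤ^d`. -/
def fhat {d : ℕ} (a : (Fin d → ℤ) → ℂ) (ξ : Fin d → ℝ) : ℂ :=
  ∑' k : Fin d → ℤ, a k * Complex.exp (-Complex.I * ((∑ i, (k i : ℝ) * ξ i : ℝ) : ℂ))

/-- `d_M = |det M|`. -/
def dm {d : ℕ} (M : Matrix (Fin d) (Fin d) ℤ) : ℕ := M.det.natAbs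

/-- A dilation matrix: integer matrix whose (complex) eigenvalues all exceed 1 in modulus. -/
def IsDilation {d : ℕ} (M : Matrix (Fin d) (Fin d) ℤ) : Prop :=
  M.det ≠ 0 ∧ ∀ z : ℂ, (M.map (Int.cast : ℤ → ℂ)).charpoly.IsRoot z → 1 < ‖z‖

/-- The real matrix associated with an integer matrix. -/
def Mr {d : ℕ} (M : Matrix (Fin d) (Fin d) ℤ) : Matrix (Fin d) (Fin d) ℝ :=
  M.map (Int.cast : ℤ → ℝ)

/-- `M`-interpolatory filter: `a(Mk) = d_M⁻¹ δ(k)`. -/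
def Interp {d : ℕ} (M : Matrix (Fin d) (Fin d) ℤ) (a : (Fin d → ℤ) → ℂ) : Prop :=
  ∀ k : Fin d → ℤ, a (M.mulVec k) = ((dm M : ℂ))⁻¹ * (if k = 0 then 1 else 0)

/-- Coset filter `u^{[γ,M]}(k) = u(γ + Mk)`. -/
def coset {d : ℕ} (M : Matrix (Fin d) (Fin d) ℤ) (γ : Fin d → ℤ)
    (a : (Fin d → ℤ) → ℂ) : (Fin d → ℤ) → ℂ := fun k => a (γ + M.mulVec k)

section

variable {d : ℕ}

@[simp]
lemma zr_zero : zr (0 : Fin d → ℤ) = 0 := by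
  funext i
  simp [zr]

lemma det_Mr (A : Matrix (Fin d) (Fin d) ℤ) : (Mr A).det = A.det := by
  simpa [Mr] using (RingHom.map_det (Int.castRingHom ℝ) A).symm

lemma Mr_one_sub (A : Matrix (Fin d) (Fin d) ℤ) : Mr (1 - A) = 1 - Mr A := by
  ext i j
  simp [Mr, Matrix.one_apply]

lemma eq_zero_of_sub_Mr_mulVec_eq_zero {A : Matrix (Fin d) (Fin d) ℤ} (hA : (1 - A).det ≠ 0)
    {c : Fin d → ℝ} (hc : c - Mr A *ᵥ c = 0) : c = 0 := by
  refine Matrix.eq_zero_of_mulVec_eq_zero (M := Mr (1 - A)) ?_ ?_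
  · rw [det_Mr]
    exact_mod_cast hA
  · rwa [Mr_one_sub, Matrix.sub_mulVec, Matrix.one_mulVec]

end

namespace Interp

variable {d : ℕ} {M : Matrix (Fin d) (Fin d) ℤ} {a : (Fin d → ℤ) → ℂ}

lemma apply_zero (h : Interp M a) : a 0 = (dm M : ℂ)⁻¹ := by
  simpa using h 0

lemma apply_zero_ne_zero (h : Interp M a) (hM : M.det ≠ 0) : a 0 ≠ 0 := by
  simpa [h.apply_zero, dm] using hM

lemma apply_mulVec_of_ne_zero (h : Interp M a) {n : Fin d → ℤ} (hn : n ≠ 0) :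
    a (M *ᵥ n) = 0 := by
  simp [h n, hn]

/-- An interpolatory filter vanishes on `Mℤ^d \ {0}` but not at `0`. -/
lemma eq_zero_and_eq_one_of_apply_mulVec (h : Interp M a) (hM : M.det ≠ 0) {ε : ℂ}
    (hε : ε ≠ 0) {n : Fin d → ℤ} (hn : a (M *ᵥ n) = ε * a 0) : n = 0 ∧ ε = 1 := by
  have ha0 := h.apply_zero_ne_zero hM
  obtain rfl : n = 0 := by
    by_contra hne
    rw [h.apply_mulVec_of_ne_zero hne] at hn
    exact mul_ne_zero hε ha0 hn.symm
  refine ⟨rfl, ?_⟩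
  rw [Matrix.mulVec_zero] at hn
  exact (mul_eq_right₀ ha0).mp hn.symm

end Interp

theorem stmt8_general {d : ℕ} (M : Matrix (Fin d) (Fin d) ℤ) (hM : IsDilation M)
    (G : Finset (Matrix (Fin d) (Fin d) ℤ))
    (Ebar : Matrix (Fin d) (Fin d) ℤ) (hEbar : Ebar ∈ G)
    (hEinv : ((1 : Matrix (Fin d) (Fin d) ℤ) - Ebar).det ≠ 0)
    (a : (Fin d → ℤ) → ℂ) (hint : Interp M a)
    (c : Fin d → ℝ) (ε : ℂ) (hε : ε = 1 ∨ ε = -1)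
    (hsym : ∀ E ∈ G, ∀ k j : Fin d → ℤ,
      zr j = (Mr E).mulVec (zr k - c) + c → a j = ε * a k)
    (hc : ∃ n : Fin d → ℤ, c - (Mr Ebar).mulVec c = zr (M.mulVec n)) :
    ε = 1 ∧ c = 0 := by
  obtain ⟨n, hn⟩ := hc
  have hε0 : ε ≠ 0 := by rcases hε with rfl | rfl <;> norm_num
  have hsym0 : a (M *ᵥ n) = ε * a 0 :=
    hsym Ebar hEbar 0 _ (by rw [← hn, zr_zero, zero_sub, Matrix.mulVec_neg]; abel)
  obtain ⟨rfl, hε1⟩ := hint.eq_zero_and_eq_one_of_apply_mulVec hM.1 hε0 hsym0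
  rw [Matrix.mulVec_zero, zr_zero] at hn
  exact ⟨hε1, eq_zero_of_sub_Mr_mulVec_eq_zero hEinv hn⟩

/-- if an `M`-interpolatory filter has symmetry type `(𝒢, c, ε)` and
`(I - Ē)c ∈ Mℤ^d` for some `Ē ∈ 𝒢` with `I - Ē` invertible, then `ε = 1` and `c = 0`. -/
theorem stmt8 {d : ℕ} (M : Matrix (Fin d) (Fin d) ℤ) (hM : IsDilation M)
    (G : Finset (Matrix (Fin d) (Fin d) ℤ))
    (hG1 : (1 : Matrix (Fin d) (Fin d) ℤ) ∈ G)
    (hGmul : ∀ E ∈ G, ∀ F ∈ G, E * F ∈ G)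
    (hGinv : ∀ E ∈ G, ∃ F ∈ G, E * F = 1)
    (Ebar : Matrix (Fin d) (Fin d) ℤ) (hEbar : Ebar ∈ G)
    (hEinv : ((1 : Matrix (Fin d) (Fin d) ℤ) - Ebar).det ≠ 0)
    (hcompat : ∀ E ∈ G, ∃ E' ∈ G, M * E = E' * M)
    (a : (Fin d → ℤ) → ℂ) (ha : (Function.support a).Finite) (hint : Interp M a)
    (c : Fin d → ℝ) (ε : ℂ) (hε : ε = 1 ∨ ε = -1)
    (hcint : ∀ E ∈ G, ∃ n : Fin d → ℤ, c - (Mr E).mulVec c = zr n)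
    (hsym : ∀ E ∈ G, ∀ k j : Fin d → ℤ,
      zr j = (Mr E).mulVec (zr k - c) + c → a j = ε * a k)
    (hc : ∃ n : Fin d → ℤ, c - (Mr Ebar).mulVec c = zr (M.mulVec n)) :
    ε = 1 ∧ c = 0 :=
  stmt8_general M hM G Ebar hEbar hEinv a hint c ε hε hsym hc
end
end

section
/- Let $\mathcal{G}$ be a finite group of $d\times d$ integer matrices, $\mathsf{M}$ a $d\times d$ integer dilation matrix, $a$ a finitely supported filter that is $\mathcal{G}$-symmetric about $0$ (i.e., $a(Ek)=a(k)$ for all $k\in\mathbb{Z}^d$, $E\in\mathcal{G}$), and $\gamma\in\mathbb{Z}^d$. If $\mathcal{G}_\gamma$ is a subgroup of $\mathcal{G}$ such that $\mathsf{M}E\mathsf{M}^{-1}\in\mathcal{G}$ and $(I_d-E)\mathsf{M}^{-1}\gamma\in\mathbb{Z}^d$ for all $E\in\mathcal{G}_\gamma$, then the coset filter $a^{[\gamma,\mathsf{M}]}$ is $\mathcal{G}_\gamma$-symmetric about $-\mathsf{M}^{-1}\gamma$, i.e., $a^{[\gamma,\mathsf{M}]}(E(k+\mathsf{M}^{-1}\gamma)-\mathsf{M}^{-1}\gamma)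 = a^{[\gamma,\mathsf{M}]}(k)$ for all $k\in\mathbb{Z}^d$ and $E\in\mathcal{G}_\gamma$. -/
open scoped BigOperators Classical
open Asymptotics Filter Matrix

noncomputable section

/-! Multiplying the relation `j = E (k + M⁻¹γ) - M⁻¹γ` by `M` and using `M E = E' M` gives
`γ + M j = E' (γ + M k)`: the affine symmetry of the coset filter is conjugate, via `k ↦ γ + M k`,
to the linear symmetry `E' ∈ 𝒢` of `a`. -/

theorem Matrix.add_mulVec_eq_of_mul_eq_mul {R n : Type*} [CommRing R] [Fintype n]
    [DecidableEq n] {A B B' : Matrix n n R} (hA : IsUnit A.det) (hAB : A * B = B' * A)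
    {g x y : n → R} (h : x = B *ᵥ (y + A⁻¹ *ᵥ g) - A⁻¹ *ᵥ g) :
    g + A *ᵥ x = B' *ᵥ (g + A *ᵥ y) := by
  subst h
  rw [mulVec_sub, mulVec_mulVec, hAB, ← mulVec_mulVec, mulVec_add A, mulVec_mulVec (M := A),
    mul_nonsing_inv _ hA, one_mulVec, mulVec_add, mulVec_add]
  abel

section IntegerToReal

variable {d : ℕ}

theorem zr_injective : Function.Injective (zr : (Fin d → ℤ) → Fin d → ℝ) :=
  fun _ _ h => funext fun i => Int.cast_injective (congrFun h i)

theorem zr_add (u v : Fin d → ℤ) : zr (u + v) = zr u + zr v := by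
  funext i
  simp [zr]

theorem zr_mulVec (A : Matrix (Fin d) (Fin d) ℤ) (v : Fin d → ℤ) :
    zr (A *ᵥ v) = Mr A *ᵥ zr v := by
  funext i
  exact RingHom.map_mulVec (Int.castRingHom ℝ) A v i

theorem Mr_mul (A B : Matrix (Fin d) (Fin d) ℤ) : Mr (A * B) = Mr A * Mr B :=
  Matrix.map_mul (f := Int.castRingHom ℝ)

theorem isUnit_det_Mr {M : Matrix (Fin d) (Fin d) ℤ} (hM : M.det ≠ 0) : IsUnit (Mr M).det := by
  have hdet : (Mr M).det = M.det := (RingHom.map_det (Int.castRingHom ℝ) M).symm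
  rw [hdet, isUnit_iff_ne_zero]
  exact_mod_cast hM

end IntegerToReal

theorem stmt11_general {d : ℕ} (M : Matrix (Fin d) (Fin d) ℤ) (hM : IsDilation M)
    (G Gγ : Finset (Matrix (Fin d) (Fin d) ℤ))
    (a : (Fin d → ℤ) → ℂ)
    (hsym : ∀ E ∈ G, ∀ k : Fin d → ℤ, a (E.mulVec k) = a k)
    (γ : Fin d → ℤ)
    (hcompat : ∀ E ∈ Gγ, ∃ E' ∈ G, M * E = E' * M) :
    ∀ E ∈ Gγ, ∀ k j : Fin d → ℤ,
      zr j = (Mr E).mulVec (zr k + (Mr M)⁻¹.mulVec (zr γ)) - (Mr M)⁻¹.mulVec (zr γ) →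
        coset M γ a j = coset M γ a k := by
  intro E hE k j hj
  obtain ⟨E', hE', hME⟩ := hcompat E hE
  have hMr : Mr M * Mr E = Mr E' * Mr M := by rw [← Mr_mul, hME, Mr_mul]
  have hγj : γ + M *ᵥ j = E' *ᵥ (γ + M *ᵥ k) := zr_injective <| by
    simpa only [zr_add, zr_mulVec] using add_mulVec_eq_of_mul_eq_mul (isUnit_det_Mr hM.1) hMr hj
  simp only [coset, hγj, hsym E' hE']

/-- if `a` is `𝒢`-symmetric about `0`, and `𝒢_γ ≤ 𝒢` satisfies
`MEM⁻¹ ∈ 𝒢` and `(I-E)M⁻¹γ ∈ ℤ^d` for all `E ∈ 𝒢_γ`, then the coset filter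
`a^{[γ,M]}` is `𝒢_γ`-symmetric about `-M⁻¹γ`. -/
theorem stmt11 {d : ℕ} (M : Matrix (Fin d) (Fin d) ℤ) (hM : IsDilation M)
    (G Gγ : Finset (Matrix (Fin d) (Fin d) ℤ))
    (hG1 : (1 : Matrix (Fin d) (Fin d) ℤ) ∈ G)
    (hGmul : ∀ E ∈ G, ∀ F ∈ G, E * F ∈ G)
    (hGinv : ∀ E ∈ G, ∃ F ∈ G, E * F = 1)
    (hsub : Gγ ⊆ G) (hGγ1 : (1 : Matrix (Fin d) (Fin d) ℤ) ∈ Gγ)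
    (hGγmul : ∀ E ∈ Gγ, ∀ F ∈ Gγ, E * F ∈ Gγ)
    (a : (Fin d → ℤ) → ℂ) (ha : (Function.support a).Finite)
    (hsym : ∀ E ∈ G, ∀ k : Fin d → ℤ, a (E.mulVec k) = a k)
    (γ : Fin d → ℤ)
    (hcompat : ∀ E ∈ Gγ, ∃ E' ∈ G, M * E = E' * M)
    (hγint : ∀ E ∈ Gγ, ∃ n : Fin d → ℤ,
      (Mr M)⁻¹.mulVec (zr γ) - (Mr E).mulVec ((Mr M)⁻¹.mulVec (zr γ)) = zr n) :
    ∀ E ∈ Gγ, ∀ k j : Fin d → ℤ,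
      zr j = (Mr E).mulVec (zr k + (Mr M)⁻¹.mulVec (zr γ)) - (Mr M)⁻¹.mulVec (zr γ) →
        coset M γ a j = coset M γ a k :=
  stmt11_general M hM G Gγ a hsym γ hcompat
end
end
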